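/- Let A, B be n×n real matrices with A invertible, and let g₁,…,g_r, h₁,…,h_r ∈ ℝⁿ. Then the matrix M = Σ_{i=1}^r K(A, g_i) · K(Bᵀ, h_i)ᵀ has displacement rank at most 2r with respect to (A⁻¹, B), i.e., rank(A⁻¹M − MB) ≤ 2r. -/

import Mathlib

/-!
Writing `G = Σᵢ gᵢ hᵢᵀ`, a matrix of rank at most `r`, the Krylov product is
`M = Σ_{j<n} Aʲ G Bʲ`. This sum telescopes under `M ↦ M - A M B` to `G - Aⁿ G Bⁿ`, and
`A⁻¹ M - M B = A⁻¹ (M - A M B)`, so the displacement has rank at most `rank G + rank (Aⁿ G Bⁿ) ≤ 2r`.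
-/

open Matrix

/-- The Krylov matrix `K(A, v)`: the `n × n` matrix whose `i`-th column is `Aⁱ v`. -/
def krylov {n : ℕ} (A : Matrix (Fin n) (Fin n) ℝ) (v : Fin n → ℝ) :
    Matrix (Fin n) (Fin n) ℝ :=
  Matrix.of fun i j => (A ^ (j : ℕ)).mulVec v i

open Finset

theorem sum_pow_mul_mul_pow_sub_mul_mul {R : Type*} [Ring R] (a b c : R) (N : ℕ) :
    ∑ j ∈ range N, a ^ j * c * b ^ j - a * (∑ j ∈ range N, a ^ j * c * b ^ j) * b =
      c - a ^ N * c * b ^ N := by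
  rw [mul_sum, sum_mul]
  have hshift : ∀ j, a * (a ^ j * c * b ^ j) * b = a ^ (j + 1) * c * b ^ (j + 1) := fun j => by
    rw [pow_succ' a, pow_succ b]
    simp only [mul_assoc]
  simp only [hshift, ← sum_sub_distrib]
  rw [sum_range_sub' (fun j => a ^ j * c * b ^ j)]
  simp

namespace Matrix

variable {m n ι K : Type*} [Fintype n] [Field K]

theorem rank_add_le (X Y : Matrix m n K) : (X + Y).rank ≤ X.rank + Y.rank := by
  unfold rank
  rw [mulVecLin_add]
  exact (Submodule.finrank_mono (LinearMap.range_add_le _ _)).trans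
    (Submodule.finrank_add_le_finrank_add_finrank _ _)

theorem rank_neg (X : Matrix m n K) : (-X).rank = X.rank := by
  have hneg : (-X).mulVecLin = -X.mulVecLin := LinearMap.ext fun v => neg_mulVec v X
  rw [rank, rank, hneg, LinearMap.range_neg]

theorem rank_sub_le (X Y : Matrix m n K) : (X - Y).rank ≤ X.rank + Y.rank := by
  simpa only [sub_eq_add_neg, rank_neg] using rank_add_le X (-Y)

theorem rank_sum_vecMulVec_le [Fintype ι] (g : ι → m → K) (h : ι → n → K) :
    (∑ i, vecMulVec (g i) (h i)).rank ≤ Fintype.card ι := by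
  have hfactor : ∑ i, vecMulVec (g i) (h i) = (of fun a i => g i a : Matrix m ι K) * of h := by
    ext a b
    simp [mul_apply, vecMulVec_apply, Matrix.sum_apply]
  rw [hfactor]
  exact (rank_mul_le_left _ _).trans (rank_le_card_width _)

end Matrix

theorem inv_mul_sub_mul_eq_inv_mul {n R : Type*} [Fintype n] [DecidableEq n] [CommRing R]
    {A : Matrix n n R} (hA : IsUnit A.det) (B M : Matrix n n R) :
    A⁻¹ * M - M * B = A⁻¹ * (M - A * M * B) := by
  rw [Matrix.mul_sub, ← Matrix.mul_assoc, ← Matrix.mul_assoc, nonsing_inv_mul A hA,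
    Matrix.one_mul]

theorem krylov_mul_transpose_krylov {n : ℕ} (A B : Matrix (Fin n) (Fin n) ℝ) (g h : Fin n → ℝ) :
    krylov A g * (krylov Bᵀ h)ᵀ = ∑ j ∈ range n, A ^ j * vecMulVec g h * B ^ j := by
  simp only [mul_vecMulVec, vecMulVec_mul]
  rw [← Fin.sum_univ_eq_sum_range (fun j => vecMulVec (A ^ j *ᵥ g) (h ᵥ* B ^ j))]
  ext a b
  simp only [mul_apply, krylov, transpose_apply, of_apply, Matrix.sum_apply, vecMulVec_apply,
    ← transpose_pow, mulVec_transpose]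

/-- **Krylov-product representation has low displacement rank.**
For invertible `A` and vectors `g₁, …, g_r, h₁, …, h_r`, the matrix
`M = Σᵢ K(A, gᵢ) ⬝ K(Bᵀ, hᵢ)ᵀ` satisfies `rank (A⁻¹ * M - M * B) ≤ 2 * r`. -/
theorem krylov_product_displacement_rank (n r : ℕ)
    (A B : Matrix (Fin n) (Fin n) ℝ) (hA : IsUnit A.det)
    (g h : Fin r → (Fin n → ℝ)) :
    (A⁻¹ * (∑ i : Fin r, krylov A (g i) * (krylov Bᵀ (h i))ᵀ) -
      (∑ i : Fin r, krylov A (g i) * (krylov Bᵀ (h i))ᵀ) * B).rank ≤ 2 * r := by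
  set G := ∑ i, vecMulVec (g i) (h i)
  have hM : ∑ i, krylov A (g i) * (krylov Bᵀ (h i))ᵀ = ∑ j ∈ range n, A ^ j * G * B ^ j := by
    simp only [krylov_mul_transpose_krylov, G, Matrix.mul_sum, Matrix.sum_mul]
    exact sum_comm
  have hG : G.rank ≤ r := by simpa using rank_sum_vecMulVec_le g h
  rw [hM, inv_mul_sub_mul_eq_inv_mul hA, sum_pow_mul_mul_pow_sub_mul_mul]
  calc (A⁻¹ * (G - A ^ n * G * B ^ n)).rank
      ≤ (G - A ^ n * G * B ^ n).rank := rank_mul_le_right _ _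
    _ ≤ G.rank + (A ^ n * G * B ^ n).rank := rank_sub_le _ _
    _ ≤ G.rank + G.rank := by
        gcongr
        exact (rank_mul_le_left _ _).trans (rank_mul_le_right _ _)
    _ ≤ 2 * r := by omega
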